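/- For the states |ψ₁⟩ = |+⟩⊗|+⟩ and |ψ₂⟩ = |−⟩⊗|−⟩ on two qubits, the Hamiltonian H = σ_X⊗I + I⊗σ_X has quantum Lipschitz constant ‖H‖_{L̃} = 2, and Tr[(|ψ₁⟩⟨ψ₁| − |ψ₂⟩⟨ψ₂|) H] = 4, hence D_{EM}(|ψ₁⟩⟨ψ₁|, |ψ₂⟩⟨ψ₂|) ≥ 2; combined with the upper bound D_{EM} ≤ n·D₁ = 2, it follows that D_{EM}(|ψ₁⟩⟨ψ₁|, |ψ₂⟩⟨ψ₂|) = 2. -/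

import Mathlib

open scoped BigOperators ComplexOrder

/-- Matrices acting on `n` qubits. -/
abbrev QMat (n : ℕ) := Matrix (Fin n → Fin 2) (Fin n → Fin 2) ℂ

/-- The operator norm (maximal absolute value of the eigenvalues) of a Hermitian matrix. -/
noncomputable def opNorm {n : ℕ} (X : QMat n) : ℝ :=
  if h : X.IsHermitian then ⨆ i, |h.eigenvalues i| else 0

/-- `H` acts as the identity on qubit `i`, i.e. `H = H̃ ⊗ I_i`. -/
def actsIdOn {n : ℕ} (i : Fin n) (H : QMat n) : Prop :=
  ∀ a b : Fin n → Fin 2,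
    H a b = if a i = b i then H (Function.update a i 0) (Function.update b i 0) else 0

/-- The quantum Lipschitz constant
`‖H‖_L = 2 maxᵢ min { ‖H − H̃‖_∞ : H̃ acts as the identity on qubit i }`. -/
noncomputable def lipConst {n : ℕ} (H : QMat n) : ℝ :=
  2 * ⨆ i : Fin n,
    sInf { r | ∃ K : QMat n, K.IsHermitian ∧ actsIdOn i K ∧ r = opNorm (H - K) }

/-- The identity and the three Pauli matrices. -/
noncomputable def pauli : Fin 4 → Matrix (Fin 2) (Fin 2) ℂ
  | 0 => 1
  | 1 => !![0, 1; 1, 0]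
  | 2 => !![0, -Complex.I; Complex.I, 0]
  | 3 => !![1, 0; 0, -1]

/-- The Pauli string `σ_{P₁} ⊗ ⋯ ⊗ σ_{Pₙ}`. -/
noncomputable def pauliString {n : ℕ} (P : Fin n → Fin 4) : QMat n :=
  fun a b => ∏ j, pauli (P j) (a j) (b j)

/-- The Pauli-string Hamiltonian `H(W) = Σ_P w_P σ_{P₁} ⊗ ⋯ ⊗ σ_{Pₙ}`. -/
noncomputable def hamW {n : ℕ} (w : (Fin n → Fin 4) → ℝ) : QMat n :=
  ∑ P, (w P : ℂ) • pauliString P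

/-- The approximated Lipschitz quantity
`‖H(W)‖_L̃ = 2 maxᵢ Σ_{P : Pᵢ ≠ I} |w_P|`. -/
noncomputable def Ltilde {n : ℕ} (w : (Fin n → Fin 4) → ℝ) : ℝ :=
  2 * ⨆ i : Fin n, ∑ P ∈ Finset.univ.filter (fun P : Fin n → Fin 4 => P i ≠ 0), |w P|

/-- The quantum EM distance, dual formulation:
`D_EM(ρ,σ) = max { Tr[(ρ−σ)H] : H Hermitian, ‖H‖_L ≤ 1 }`. -/
noncomputable def emDistDual {n : ℕ} (ρ σ : QMat n) : ℝ :=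
  sSup { r | ∃ H : QMat n, H.IsHermitian ∧ lipConst H ≤ 1 ∧ r = (((ρ - σ) * H).trace).re }

/-- The density matrix `|v⟩⟨v|` of a pure state with amplitudes `v`. -/
noncomputable def outer {n : ℕ} (v : (Fin n → Fin 2) → ℂ) : QMat n :=
  Matrix.vecMulVec v (star v)

/-- Amplitudes of `|+⟩ ⊗ |+⟩`. -/
noncomputable def vPlusPlus : (Fin 2 → Fin 2) → ℂ := fun _ => (2 : ℂ)⁻¹

/-- Amplitudes of `|−⟩ ⊗ |−⟩`. -/
noncomputable def vMinusMinus : (Fin 2 → Fin 2) → ℂ := fun u =>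
  (-1 : ℂ) ^ ((u 0 : ℕ) + (u 1 : ℕ)) * (2 : ℂ)⁻¹


section Aux

open Matrix

/-- Enumeration of sums over `Fin 2 → Fin 2`. -/
theorem sum_fun_two {M : Type*} [AddCommMonoid M] (f : (Fin 2 → Fin 2) → M) :
    ∑ a, f a = f ![0,0] + f ![0,1] + f ![1,0] + f ![1,1] := by
  rw [Fintype.sum_equiv (piFinTwoEquiv (fun _ => Fin 2)) f (fun p => f ![p.1, p.2]) ?_]
  · rw [Fintype.sum_prod_type, Fin.sum_univ_two, Fin.sum_univ_two, Fin.sum_univ_two]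
    abel
  · intro x; congr 1; funext i; fin_cases i <;> rfl

theorem fin2cases (x : Fin 2) : x = 0 ∨ x = 1 := by fin_cases x <;> simp

theorem funeq2 {a b : Fin 2 → Fin 2} : a = b ↔ a 0 = b 0 ∧ a 1 = b 1 :=
  ⟨fun h => by subst h; exact ⟨rfl, rfl⟩,
   fun ⟨h0, h1⟩ => funext fun i => by fin_cases i <;> assumption⟩

theorem eig_abs_eq {n : Type*} [Fintype n] [DecidableEq n] (M : Matrix n n ℂ)
    (hM : M.IsHermitian) (c : ℝ) (hc : 0 ≤ c)
    (h : M * M = (c^2 : ℂ) • 1) (j : n) : |hM.eigenvalues j| = c := by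
  have hv := hM.mulVec_eigenvectorBasis j
  have h2 : (M * M) *ᵥ ⇑(hM.eigenvectorBasis j)
      = ((hM.eigenvalues j)^2 : ℝ) • ⇑(hM.eigenvectorBasis j) := by
    rw [← Matrix.mulVec_mulVec, hv, Matrix.mulVec_smul, hv, smul_smul, sq]
  rw [h, Matrix.smul_mulVec, Matrix.one_mulVec] at h2
  have hne := hM.eigenvectorBasis.orthonormal.ne_zero j
  have hex : ∃ i, (⇑(hM.eigenvectorBasis j)) i ≠ 0 := by
    by_contra hno
    push_neg at hno
    exact hne (by ext k; exact hno k)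
  obtain ⟨i, hi⟩ := hex
  have h3 := congrFun h2 i
  simp only [Pi.smul_apply, smul_eq_mul, Complex.real_smul] at h3
  have h4 : ((c:ℂ))^2 = (((hM.eigenvalues j)^2 : ℝ) : ℂ) := mul_right_cancel₀ hi h3
  have h5 : (c^2 : ℝ) = (hM.eigenvalues j)^2 := by exact_mod_cast h4
  rw [← Real.sqrt_sq_eq_abs, ← h5, Real.sqrt_sq hc]

theorem quadform_abs_le {n : Type*} [Fintype n] [DecidableEq n] (M : Matrix n n ℂ)
    (hM : M.IsHermitian) (v : n → ℂ) (hv : star v ⬝ᵥ v = 1) :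
    |(star v ⬝ᵥ M *ᵥ v).re| ≤ ⨆ i, |hM.eigenvalues i| := by
  set U : Matrix n n ℂ := (hM.eigenvectorUnitary : Matrix n n ℂ) with hU
  set w : n → ℂ := star U *ᵥ v with hw
  have hUU : U * star U = 1 := (Matrix.mem_unitaryGroup_iff).mp hM.eigenvectorUnitary.2
  have hrow : star v ᵥ* U = star w := by
    rw [hw, Matrix.star_mulVec, Matrix.star_eq_conjTranspose, Matrix.conjTranspose_conjTranspose]
  have key : star v ⬝ᵥ M *ᵥ v = star w ⬝ᵥ (diagonal (Complex.ofReal ∘ hM.eigenvalues)) *ᵥ w := by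
    conv_lhs => rw [hM.spectral_theorem, Unitary.conjStarAlgAut_apply]
    rw [← Matrix.mulVec_mulVec, ← Matrix.mulVec_mulVec, Matrix.dotProduct_mulVec, hrow]; rfl
  have hww : star w ⬝ᵥ w = 1 := by
    calc star w ⬝ᵥ w = (star v ᵥ* U) ⬝ᵥ (star U *ᵥ v) := by rw [hrow, hw]
      _ = ((star v ᵥ* U) ᵥ* star U) ⬝ᵥ v := by rw [Matrix.dotProduct_mulVec]
      _ = (star v ᵥ* (U * star U)) ⬝ᵥ v := by rw [Matrix.vecMul_vecMul]
      _ = 1 := by rw [hUU, Matrix.vecMul_one, hv]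
  have hsum1 : ∑ i, Complex.normSq (w i) = 1 := by
    have := congrArg Complex.re hww
    simpa [dotProduct, Complex.re_sum, Complex.normSq_apply, mul_comm] using this
  have hre : (star v ⬝ᵥ M *ᵥ v).re = ∑ i, hM.eigenvalues i * Complex.normSq (w i) := by
    rw [key]
    simp only [dotProduct, Matrix.mulVec_diagonal, Function.comp_apply, Pi.star_apply,
      Complex.re_sum]
    congr 1; ext i
    rw [Complex.star_def]
    have h1 : (starRingEnd ℂ) (w i) * ((Complex.ofReal (hM.eigenvalues i)) * w i)
        = (hM.eigenvalues i : ℂ) * ((starRingEnd ℂ) (w i) * w i) := by ring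
    rw [h1, ← Complex.normSq_eq_conj_mul_self, ← Complex.ofReal_mul]
    exact Complex.ofReal_re _
  rw [hre]
  calc |∑ i, hM.eigenvalues i * Complex.normSq (w i)|
      ≤ ∑ i, |hM.eigenvalues i * Complex.normSq (w i)| := Finset.abs_sum_le_sum_abs _ _
    _ ≤ ∑ i, (⨆ j, |hM.eigenvalues j|) * Complex.normSq (w i) := by
        apply Finset.sum_le_sum
        intro i _
        rw [abs_mul, abs_of_nonneg (Complex.normSq_nonneg _)]
        exact mul_le_mul_of_nonneg_right
          (le_ciSup (f := fun j => |hM.eigenvalues j|)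
            (Set.Finite.bddAbove (Set.finite_range _)) i)
          (Complex.normSq_nonneg _)
    _ = ⨆ j, |hM.eigenvalues j| := by rw [← Finset.mul_sum, hsum1, mul_one]

theorem opNorm_nonneg {n : ℕ} (X : QMat n) : 0 ≤ opNorm X := by
  rw [opNorm]
  split
  · rename_i h
    obtain ⟨j⟩ := (inferInstance : Nonempty (Fin n → Fin 2))
    exact le_trans (abs_nonneg _)
      (le_ciSup (f := fun i => |h.eigenvalues i|) (Set.Finite.bddAbove (Set.finite_range _)) j)
  · exact le_refl 0

theorem opNorm_eq {n : ℕ} (M : QMat n) (hM : M.IsHermitian) (c : ℝ) (hc : 0 ≤ c)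
    (h : M * M = (c^2 : ℂ) • 1) : opNorm M = c := by
  rw [opNorm, dif_pos hM]
  rw [iSup_congr (fun j => eig_abs_eq M hM c hc h j)]
  exact ciSup_const

theorem abs_quad_le_opNorm {n : ℕ} (M : QMat n) (hM : M.IsHermitian)
    (v : (Fin n → Fin 2) → ℂ) (hv : star v ⬝ᵥ v = 1) :
    |(star v ⬝ᵥ M *ᵥ v).re| ≤ opNorm M := by
  rw [opNorm, dif_pos hM]
  exact quadform_abs_le M hM v hv

theorem XI_herm : (pauliString ![1,0] : QMat 2).IsHermitian := by
  rw [Matrix.IsHermitian]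
  ext a b
  simp only [Matrix.conjTranspose_apply, pauliString, Fin.prod_univ_two]
  rcases fin2cases (a 0) with h1 | h1 <;> rcases fin2cases (a 1) with h2 | h2 <;>
    rcases fin2cases (b 0) with h3 | h3 <;> rcases fin2cases (b 1) with h4 | h4 <;>
    simp [h1, h2, h3, h4, pauli, Matrix.one_apply, funeq2]

theorem IX_herm : (pauliString ![0,1] : QMat 2).IsHermitian := by
  rw [Matrix.IsHermitian]
  ext a b
  simp only [Matrix.conjTranspose_apply, pauliString, Fin.prod_univ_two]
  rcases fin2cases (a 0) with h1 | h1 <;> rcases fin2cases (a 1) with h2 | h2 <;>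
    rcases fin2cases (b 0) with h3 | h3 <;> rcases fin2cases (b 1) with h4 | h4 <;>
    simp [h1, h2, h3, h4, pauli, Matrix.one_apply, funeq2]

theorem XI_sq : (pauliString ![1,0] : QMat 2) * pauliString ![1,0] = 1 := by
  ext a b
  rw [Matrix.mul_apply, sum_fun_two]
  simp only [pauliString, Fin.prod_univ_two]
  rcases fin2cases (a 0) with h1 | h1 <;> rcases fin2cases (a 1) with h2 | h2 <;>
    rcases fin2cases (b 0) with h3 | h3 <;> rcases fin2cases (b 1) with h4 | h4 <;>
    simp [h1, h2, h3, h4, pauli, Matrix.one_apply, funeq2]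

theorem IX_sq : (pauliString ![0,1] : QMat 2) * pauliString ![0,1] = 1 := by
  ext a b
  rw [Matrix.mul_apply, sum_fun_two]
  simp only [pauliString, Fin.prod_univ_two]
  rcases fin2cases (a 0) with h1 | h1 <;> rcases fin2cases (a 1) with h2 | h2 <;>
    rcases fin2cases (b 0) with h3 | h3 <;> rcases fin2cases (b 1) with h4 | h4 <;>
    simp [h1, h2, h3, h4, pauli, Matrix.one_apply, funeq2]

theorem IX_actsIdOn : actsIdOn 0 (pauliString ![0,1] : QMat 2) := by
  intro a b
  simp only [pauliString, Fin.prod_univ_two, Function.update]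
  rcases fin2cases (a 0) with h1 | h1 <;> rcases fin2cases (b 0) with h3 | h3 <;>
    simp [h1, h3, pauli, Matrix.one_apply, funeq2]

theorem XI_actsIdOn : actsIdOn 1 (pauliString ![1,0] : QMat 2) := by
  intro a b
  simp only [pauliString, Fin.prod_univ_two, Function.update]
  rcases fin2cases (a 1) with h1 | h1 <;> rcases fin2cases (b 1) with h3 | h3 <;>
    simp [h1, h3, pauli, Matrix.one_apply, funeq2]

theorem actsIdOn_smul {n : ℕ} (i : Fin n) (K : QMat n) (c : ℂ) (hK : actsIdOn i K) :
    actsIdOn i (c • K) := by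
  intro a b
  simp only [Matrix.smul_apply, hK a b, smul_eq_mul]
  split <;> simp

theorem actsIdOn_zero {n : ℕ} (i : Fin n) : actsIdOn i (0 : QMat n) := by
  intro a b
  simp only [Matrix.zero_apply, ite_self]

theorem trace_outer_mul {n : ℕ} (v : (Fin n → Fin 2) → ℂ) (M : QMat n) :
    (outer v * M).trace = star v ⬝ᵥ (M *ᵥ v) := by
  rw [Matrix.trace]
  simp only [Matrix.diag, Matrix.mul_apply, outer, Matrix.vecMulVec_apply, Pi.star_apply,
    dotProduct, Matrix.mulVec, Finset.mul_sum]
  rw [Finset.sum_comm]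
  refine Finset.sum_congr rfl fun b _ => Finset.sum_congr rfl fun a _ => ?_
  ring

theorem trace_diff_outer {n : ℕ} (v v' : (Fin n → Fin 2) → ℂ) (M : QMat n) :
    ((outer v - outer v') * M).trace = star v ⬝ᵥ (M *ᵥ v) - star v' ⬝ᵥ (M *ᵥ v') := by
  rw [Matrix.sub_mul, Matrix.trace_sub, trace_outer_mul, trace_outer_mul]

/-- Amplitudes of `|+⟩ ⊗ |−⟩`. -/
noncomputable def vMid : (Fin 2 → Fin 2) → ℂ := fun u => (-1 : ℂ) ^ ((u 1 : ℕ)) * (2 : ℂ)⁻¹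

theorem unit_vPP : star vPlusPlus ⬝ᵥ vPlusPlus = 1 := by
  rw [dotProduct, sum_fun_two]
  norm_num [vPlusPlus]

theorem unit_vMM : star vMinusMinus ⬝ᵥ vMinusMinus = 1 := by
  rw [dotProduct, sum_fun_two]
  norm_num [vMinusMinus, Complex.ext_iff]

theorem unit_vMid : star vMid ⬝ᵥ vMid = 1 := by
  rw [dotProduct, sum_fun_two]
  norm_num [vMid, Complex.ext_iff]

theorem traceMid1 (L : QMat 2) (hL : actsIdOn 1 L) :
    ((outer vPlusPlus - outer vMid) * L).trace = 0 := by
  rw [Matrix.trace]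
  apply Finset.sum_eq_zero
  intro a _
  rw [Matrix.diag]
  rw [Matrix.mul_apply]
  apply Finset.sum_eq_zero
  intro b _
  by_cases h : b 1 = a 1
  · have hz : (outer vPlusPlus - outer vMid) a b = 0 := by
      rcases fin2cases (a 1) with h1 | h1 <;>
        simp [outer, Matrix.sub_apply, Matrix.vecMulVec_apply, vPlusPlus, vMid, h, h1] <;>
        norm_num [Complex.ext_iff]
    rw [hz, zero_mul]
  · rw [hL b a, if_neg h, mul_zero]

theorem traceMid0 (K : QMat 2) (hK : actsIdOn 0 K) :
    ((outer vMid - outer vMinusMinus) * K).trace = 0 := by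
  rw [Matrix.trace]
  apply Finset.sum_eq_zero
  intro a _
  rw [Matrix.diag]
  rw [Matrix.mul_apply]
  apply Finset.sum_eq_zero
  intro b _
  by_cases h : b 0 = a 0
  · have hz : (outer vMid - outer vMinusMinus) a b = 0 := by
      rcases fin2cases (a 0) with h1 | h1 <;> rcases fin2cases (a 1) with h2 | h2 <;>
        rcases fin2cases (b 1) with h3 | h3 <;>
        simp [outer, Matrix.sub_apply, Matrix.vecMulVec_apply, vMinusMinus, vMid, h, h1, h2, h3] <;>
        norm_num [Complex.ext_iff]
    rw [hz, zero_mul]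
  · rw [hK b a, if_neg h, mul_zero]

theorem piece_le (M : QMat 2) (hM : M.IsHermitian) (v v' : (Fin 2 → Fin 2) → ℂ)
    (hv : star v ⬝ᵥ v = 1) (hv' : star v' ⬝ᵥ v' = 1) :
    (((outer v - outer v') * M).trace).re ≤ 2 * opNorm M := by
  rw [trace_diff_outer, Complex.sub_re]
  have h1 := (abs_le.mp (abs_quad_le_opNorm M hM v hv)).2
  have h2 := (abs_le.mp (abs_quad_le_opNorm M hM v' hv')).1
  linarith

end Aux

/-- For `|ψ₁⟩ = |+⟩|+⟩`, `|ψ₂⟩ = |−⟩|−⟩` and `H = σ_X⊗I + I⊗σ_X` (with Pauli weights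
`w` supported on the strings `XI` and `IX`): `‖H‖_L̃ = 2` (so `‖H‖_L ≤ 2`),
`Tr[(|ψ₁⟩⟨ψ₁| − |ψ₂⟩⟨ψ₂|)H] = 4`, hence `D_EM ≥ 2`; combined with the upper bound
`D_EM ≤ n·D₁ = 2` this gives `D_EM(|ψ₁⟩⟨ψ₁|, |ψ₂⟩⟨ψ₂|) = 2`. -/
theorem em_distance_plus_minus
    (H : QMat 2) (hH : H = pauliString ![1, 0] + pauliString ![0, 1])
    (w : (Fin 2 → Fin 4) → ℝ)
    (hw : ∀ P, w P = if P = ![1, 0] ∨ P = ![0, 1] then 1 else 0) :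
    Ltilde w = 2 ∧ hamW w = H ∧ lipConst H ≤ 2 ∧
    (((outer vPlusPlus - outer vMinusMinus) * H).trace).re = 4 ∧
    2 ≤ emDistDual (outer vPlusPlus) (outer vMinusMinus) ∧
    emDistDual (outer vPlusPlus) (outer vMinusMinus) = 2 := by
  have hXIherm := XI_herm
  have hIXherm := IX_herm
  have Hherm : H.IsHermitian := by rw [hH]; exact hXIherm.add hIXherm
  -- conjunct 1
  have c1 : Ltilde w = 2 := by
    have hf : ∀ i : Fin 2,
        ∑ P ∈ Finset.univ.filter (fun P : Fin 2 → Fin 4 => P i ≠ 0), |w P| = 1 := by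
      intro i
      fin_cases i
      · rw [Finset.sum_eq_single_of_mem ![1,0] (by decide)]
        · rw [hw]; norm_num
        · intro P hP hne
          rw [hw, Finset.mem_filter] at *
          rw [if_neg, abs_zero]
          rintro (rfl | rfl)
          · exact hne rfl
          · exact hP.2 rfl
      · rw [Finset.sum_eq_single_of_mem ![0,1] (by decide)]
        · rw [hw]; norm_num
        · intro P hP hne
          rw [hw, Finset.mem_filter] at *
          rw [if_neg, abs_zero]
          rintro (rfl | rfl)
          · exact hP.2 rfl
          · exact hne rfl
    rw [Ltilde,
      show (fun i : Fin 2 => ∑ P ∈ Finset.univ.filter (fun P : Fin 2 → Fin 4 => P i ≠ 0), |w P|)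
        = fun _ => (1:ℝ) from funext hf, ciSup_const]
    norm_num
  -- conjunct 2
  have c2 : hamW w = H := by
    rw [hamW, hH]
    have key : ∀ P : Fin 2 → Fin 4, (w P : ℂ) • pauliString P
        = (if P = ![1,0] then pauliString ![1,0] else 0)
          + (if P = ![0,1] then pauliString ![0,1] else 0) := by
      intro P
      rw [hw]
      by_cases h1 : P = ![1,0]
      · subst h1
        rw [if_pos (Or.inl rfl), if_pos rfl, if_neg (by decide)]
        norm_num
      · by_cases h2 : P = ![0,1]
        · subst h2
          rw [if_pos (Or.inr rfl), if_neg (by decide), if_pos rfl]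
          norm_num
        · rw [if_neg (by tauto), if_neg h1, if_neg h2]
          norm_num
    simp only [key]
    rw [Finset.sum_add_distrib, Finset.sum_ite_eq' Finset.univ, Finset.sum_ite_eq' Finset.univ]
    simp
  -- conjunct 3
  have hXIop : opNorm (pauliString ![1,0] : QMat 2) = 1 :=
    opNorm_eq _ hXIherm 1 zero_le_one (by rw [XI_sq]; norm_num)
  have hIXop : opNorm (pauliString ![0,1] : QMat 2) = 1 :=
    opNorm_eq _ hIXherm 1 zero_le_one (by rw [IX_sq]; norm_num)
  have c3 : lipConst H ≤ 2 := by
    rw [lipConst]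
    have : (⨆ i : Fin 2, sInf { r | ∃ K : QMat 2, K.IsHermitian ∧ actsIdOn i K
        ∧ r = opNorm (H - K) }) ≤ 1 := by
      apply ciSup_le
      intro i
      fin_cases i
      · refine csInf_le_of_le ⟨0, ?_⟩ ⟨pauliString ![0,1], hIXherm, IX_actsIdOn, rfl⟩ ?_
        · rintro x ⟨K, _, _, rfl⟩; exact opNorm_nonneg _
        · rw [show H - pauliString ![0,1] = pauliString ![1,0] by
            rw [hH, add_sub_cancel_right], hXIop]
      · refine csInf_le_of_le ⟨0, ?_⟩ ⟨pauliString ![1,0], hXIherm, XI_actsIdOn, rfl⟩ ?_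
        · rintro x ⟨K, _, _, rfl⟩; exact opNorm_nonneg _
        · rw [show H - pauliString ![1,0] = pauliString ![0,1] by
            rw [hH]; abel, hIXop]
    linarith
  -- conjunct 4
  have c4 : (((outer vPlusPlus - outer vMinusMinus) * H).trace).re = 4 := by
    rw [hH, Matrix.trace]
    simp only [Matrix.diag, Matrix.mul_apply, Matrix.sub_apply, Matrix.add_apply,
      outer, Matrix.vecMulVec_apply, Pi.star_apply, pauliString, Fin.prod_univ_two,
      vPlusPlus, vMinusMinus]
    rw [sum_fun_two]
    simp only [sum_fun_two]
    norm_num [pauli, Matrix.cons_val_zero, Matrix.cons_val_one, Matrix.head_cons,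
      Matrix.one_apply, Complex.ext_iff]
  have c4' : ((outer vPlusPlus - outer vMinusMinus) * H).trace.im = 0 := by
    rw [hH, Matrix.trace]
    simp only [Matrix.diag, Matrix.mul_apply, Matrix.sub_apply, Matrix.add_apply,
      outer, Matrix.vecMulVec_apply, Pi.star_apply, pauliString, Fin.prod_univ_two,
      vPlusPlus, vMinusMinus]
    rw [sum_fun_two]
    simp only [sum_fun_two]
    norm_num [pauli, Matrix.cons_val_zero, Matrix.cons_val_one, Matrix.head_cons,
      Matrix.one_apply, Complex.ext_iff]
  -- membership of 2 in the dual set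
  have hc2 : star ((2:ℂ)⁻¹) = (2:ℂ)⁻¹ := by simp
  have H2herm : ((2:ℂ)⁻¹ • H).IsHermitian := by
    rw [Matrix.IsHermitian, Matrix.conjTranspose_smul, hc2, Hherm]
  have H2lip : lipConst ((2:ℂ)⁻¹ • H) ≤ 1 := by
    rw [lipConst]
    have : (⨆ i : Fin 2, sInf { r | ∃ K : QMat 2, K.IsHermitian ∧ actsIdOn i K
        ∧ r = opNorm ((2:ℂ)⁻¹ • H - K) }) ≤ 1/2 := by
      apply ciSup_le
      intro i
      have herm2 : ∀ A : QMat 2, A.IsHermitian → ((2:ℂ)⁻¹ • A).IsHermitian := by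
        intro A hA
        rw [Matrix.IsHermitian, Matrix.conjTranspose_smul, hc2, hA]
      have sq2 : ∀ A : QMat 2, A * A = 1 →
          ((2:ℂ)⁻¹ • A) * ((2:ℂ)⁻¹ • A) = (((1/2:ℝ))^2 : ℂ) • 1 := by
        intro A hA
        rw [smul_mul_assoc, mul_smul_comm, hA, smul_smul]
        norm_num
      fin_cases i
      · refine csInf_le_of_le ⟨0, ?_⟩
          ⟨(2:ℂ)⁻¹ • pauliString ![0,1], herm2 _ hIXherm,
            actsIdOn_smul _ _ _ IX_actsIdOn, rfl⟩ ?_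
        · rintro x ⟨K, _, _, rfl⟩; exact opNorm_nonneg _
        · rw [show (2:ℂ)⁻¹ • H - (2:ℂ)⁻¹ • pauliString ![0,1]
              = (2:ℂ)⁻¹ • pauliString ![1,0] by rw [hH, smul_add, add_sub_cancel_right]]
          rw [opNorm_eq _ (herm2 _ hXIherm) (1/2) (by norm_num) (sq2 _ XI_sq)]
      · refine csInf_le_of_le ⟨0, ?_⟩
          ⟨(2:ℂ)⁻¹ • pauliString ![1,0], herm2 _ hXIherm,
            actsIdOn_smul _ _ _ XI_actsIdOn, rfl⟩ ?_
        · rintro x ⟨K, _, _, rfl⟩; exact opNorm_nonneg _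
        · rw [show (2:ℂ)⁻¹ • H - (2:ℂ)⁻¹ • pauliString ![1,0]
              = (2:ℂ)⁻¹ • pauliString ![0,1] by rw [hH, smul_add]; abel]
          rw [opNorm_eq _ (herm2 _ hIXherm) (1/2) (by norm_num) (sq2 _ IX_sq)]
    linarith
  have H2tr : (((outer vPlusPlus - outer vMinusMinus) * ((2:ℂ)⁻¹ • H)).trace).re = 2 := by
    rw [Matrix.mul_smul, Matrix.trace_smul]
    simp only [smul_eq_mul, Complex.mul_re, c4, c4']
    norm_num
  have mem2 : (2:ℝ) ∈ { r | ∃ H' : QMat 2, H'.IsHermitian ∧ lipConst H' ≤ 1 ∧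
      r = (((outer vPlusPlus - outer vMinusMinus) * H').trace).re } :=
    ⟨(2:ℂ)⁻¹ • H, H2herm, H2lip, H2tr.symm⟩
  -- upper bound
  have ub : ∀ r ∈ { r | ∃ H' : QMat 2, H'.IsHermitian ∧ lipConst H' ≤ 1 ∧
      r = (((outer vPlusPlus - outer vMinusMinus) * H').trace).re }, r ≤ 2 := by
    rintro r ⟨H', hH', hlip, rfl⟩
    apply le_of_forall_pos_le_add
    intro ε hε
    rw [lipConst] at hlip
    set f : Fin 2 → ℝ := fun i => sInf { r | ∃ K : QMat 2, K.IsHermitian ∧ actsIdOn i K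
      ∧ r = opNorm (H' - K) } with hfdef
    have hTne : ∀ i : Fin 2, { r | ∃ K : QMat 2, K.IsHermitian ∧ actsIdOn i K
        ∧ r = opNorm (H' - K) }.Nonempty :=
      fun i => ⟨opNorm (H' - 0), 0, Matrix.isHermitian_zero, actsIdOn_zero i, rfl⟩
    have hsup : (⨆ i, f i) ≤ 1/2 := by linarith
    have hi : ∀ i : Fin 2, f i < 1/2 + ε/4 := by
      intro i
      have := le_ciSup (f := f) (Set.Finite.bddAbove (Set.finite_range f)) i
      have h4 : 0 < ε/4 := by linarith
      linarith
    obtain ⟨x0, ⟨K, hKh, hKa, rfl⟩, hKlt⟩ := exists_lt_of_csInf_lt (hTne 0) (hi 0)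
    obtain ⟨x1, ⟨L, hLh, hLa, rfl⟩, hLlt⟩ := exists_lt_of_csInf_lt (hTne 1) (hi 1)
    have hdec : ((outer vPlusPlus - outer vMinusMinus) * H').trace
        = ((outer vPlusPlus - outer vMid) * (H' - L)).trace
          + ((outer vMid - outer vMinusMinus) * (H' - K)).trace := by
      rw [Matrix.mul_sub, Matrix.mul_sub, Matrix.trace_sub, Matrix.trace_sub,
        traceMid1 L hLa, traceMid0 K hKa, sub_zero, sub_zero, ← Matrix.trace_add,
        ← Matrix.add_mul, sub_add_sub_cancel]
    rw [hdec, Complex.add_re]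
    have p1 := piece_le (H' - L) (hH'.sub hLh) vPlusPlus vMid unit_vPP unit_vMid
    have p2 := piece_le (H' - K) (hH'.sub hKh) vMid vMinusMinus unit_vMid unit_vMM
    linarith
  -- conclusion
  have hbdd : BddAbove { r | ∃ H' : QMat 2, H'.IsHermitian ∧ lipConst H' ≤ 1 ∧
      r = (((outer vPlusPlus - outer vMinusMinus) * H').trace).re } := ⟨2, ub⟩
  have c6 : emDistDual (outer vPlusPlus) (outer vMinusMinus) = 2 := by
    rw [emDistDual]
    exact le_antisymm (csSup_le ⟨2, mem2⟩ ub) (le_csSup hbdd mem2)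
  exact ⟨c1, c2, c3, c4, c6.ge, c6⟩
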